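/- Let d ≥ 2 and, for i ∈ Fin d, let B_i = closedBall(√(d/(d−1)) · e_i, 1) ⊆ EuclideanSpace ℝ (Fin d), where e_i is the i-th standard unit vector. Then the intersection ⋂_{i ∈ Fin d} B_i equals the singleton { (1/√(d(d−1))) · (1,1,…,1) }; in particular, the point (1/√(d(d−1)))·(1,…,1) is at distance exactly 1 from each center √(d/(d−1))·e_i and is the unique point common to all d balls. -/

import Mathlib

/-- The all-ones vector `(1, …, 1)` of `ℝ^d`. -/
def allOnes (d : ℕ) : EuclideanSpace ℝ (Fin d) := WithLp.toLp 2 (fun _ => (1 : ℝ))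

lemma dist_sq_eq_sum (d : ℕ) (x y : EuclideanSpace ℝ (Fin d)) :
    dist x y ^ 2 = ∑ j, (x j - y j) ^ 2 := by
  rw [EuclideanSpace.dist_eq, Real.sq_sqrt (by positivity)]
  simp [Real.dist_eq, sq_abs]

lemma sum_sq_sub_single (d : ℕ) (x : EuclideanSpace ℝ (Fin d)) (b : ℝ) (i : Fin d) :
    ∑ j, (x j - (b • EuclideanSpace.single i (1 : ℝ)) j) ^ 2
      = (∑ j, x j ^ 2) - 2 * b * x i + b ^ 2 := by
  have h : ∀ j : Fin d, (x j - (b • EuclideanSpace.single i (1 : ℝ)) j) ^ 2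
      = x j ^ 2 - 2 * (if j = i then b * x j else 0) + (if j = i then b ^ 2 else 0) := by
    intro j
    simp only [PiLp.smul_apply, EuclideanSpace.single_apply, smul_eq_mul]
    by_cases hj : j = i <;> simp [hj] <;> ring
  rw [Finset.sum_congr rfl fun j _ => h j]
  rw [Finset.sum_add_distrib, Finset.sum_sub_distrib, ← Finset.mul_sum]
  simp [Finset.sum_ite_eq]
  ring

/-- For `d ≥ 2`, the `d` unit balls centered at `√(d/(d-1)) · e_i` intersect in exactly
the single point `(1/√(d(d-1))) · (1,…,1)`, which in particular is at distance exactly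
`1` from each center. First step of the lower-bound construction for MEB validity with
`n ≤ (d+1)t - d` nodes. -/
theorem unit_balls_unique_common_point (d : ℕ) (hd : 2 ≤ d) :
    (⋂ i : Fin d,
        Metric.closedBall
          (Real.sqrt ((d : ℝ) / ((d : ℝ) - 1)) • EuclideanSpace.single i (1 : ℝ)) 1)
      = {(Real.sqrt ((d : ℝ) * ((d : ℝ) - 1)))⁻¹ • allOnes d} ∧
    ∀ i : Fin d,
      dist ((Real.sqrt ((d : ℝ) * ((d : ℝ) - 1)))⁻¹ • allOnes d)
        (Real.sqrt ((d : ℝ) / ((d : ℝ) - 1)) • EuclideanSpace.single i (1 : ℝ)) = 1 := by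
  set D : ℝ := (d : ℝ) with hD
  have hD2 : (2 : ℝ) ≤ D := by rw [hD]; exact_mod_cast hd
  have hD1 : (0 : ℝ) < D - 1 := by linarith
  have hDpos : (0 : ℝ) < D := by linarith
  set a : ℝ := (Real.sqrt (D * (D - 1)))⁻¹ with ha
  set b : ℝ := Real.sqrt (D / (D - 1)) with hb
  have ha2 : a ^ 2 = (D * (D - 1))⁻¹ := by
    rw [ha, ← Real.sqrt_inv, Real.sq_sqrt (by positivity)]
  have hkey : D * (D - 1) * a ^ 2 = 1 := by
    rw [ha2]; field_simp
  have hba : b = D * a := by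
    rw [hb, ha]
    rw [show D / (D - 1) = D ^ 2 / (D * (D - 1)) by field_simp]
    rw [Real.sqrt_div (by positivity), Real.sqrt_sq hDpos.le]
    ring
  set p : EuclideanSpace ℝ (Fin d) := a • allOnes d with hp
  have hpj : ∀ j : Fin d, p j = a := by
    intro j; simp [hp, allOnes]
  -- distance from p to each center is 1
  have hdist1 : ∀ i : Fin d, dist p (b • EuclideanSpace.single i (1 : ℝ)) = 1 := by
    intro i
    have hsq : dist p (b • EuclideanSpace.single i (1 : ℝ)) ^ 2 = 1 := by
      rw [dist_sq_eq_sum, sum_sq_sub_single]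
      simp only [hpj]
      rw [Finset.sum_const, Finset.card_fin, nsmul_eq_mul, ← hD, hba]
      linear_combination hkey
    nlinarith [dist_nonneg (x := p) (y := b • EuclideanSpace.single i (1 : ℝ)), hsq]
  constructor
  · ext x
    simp only [Set.mem_iInter, Metric.mem_closedBall, Set.mem_singleton_iff]
    constructor
    · intro hx
      -- each hypothesis in squared form
      have hx2 : ∀ i : Fin d,
          (∑ j, x j ^ 2) - 2 * b * x i + b ^ 2 ≤ 1 := by
        intro i
        have h := hx i
        have h2 : dist x (b • EuclideanSpace.single i (1 : ℝ)) ^ 2 ≤ 1 := by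
          nlinarith [dist_nonneg (x := x) (y := b • EuclideanSpace.single i (1 : ℝ))]
        rwa [dist_sq_eq_sum, sum_sq_sub_single] at h2
      have hsum : ∑ i : Fin d, ((∑ j, x j ^ 2) - 2 * b * x i + b ^ 2)
          ≤ ∑ _i : Fin d, (1 : ℝ) :=
        Finset.sum_le_sum fun i _ => hx2 i
      set Q : ℝ := ∑ j, x j ^ 2 with hQ
      set S : ℝ := ∑ j, x j with hS
      have hsum' : D * Q - 2 * b * S + D * b ^ 2 ≤ D := by
        have hl : ∑ i : Fin d, (Q - 2 * b * x i + b ^ 2)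
            = D * Q - 2 * b * S + D * b ^ 2 := by
          rw [Finset.sum_add_distrib, Finset.sum_sub_distrib, Finset.sum_const,
            Finset.sum_const, Finset.card_fin, ← Finset.mul_sum, ← hS]
          push_cast [hD]
          ring
        rw [hl] at hsum
        simpa [hD] using hsum
      -- squared distance to p
      have ht : dist x p ^ 2 = Q - 2 * a * S + D * a ^ 2 := by
        rw [dist_sq_eq_sum]
        have : ∀ j : Fin d, (x j - p j) ^ 2 = x j ^ 2 - 2 * a * x j + a ^ 2 := by
          intro j; rw [hpj]; ring
        rw [Finset.sum_congr rfl fun j _ => this j]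
        rw [Finset.sum_add_distrib, Finset.sum_sub_distrib, Finset.sum_const,
          Finset.card_fin, ← Finset.mul_sum, ← hS, ← hQ]
        push_cast [hD]
        ring
      have htle : dist x p ^ 2 ≤ 0 := by
        have hDt : D * (dist x p ^ 2) ≤ 0 := by
          rw [ht, hba] at *
          nlinarith [hkey, hsum']
        nlinarith [hDt, hDpos]
      have : dist x p = 0 := le_antisymm (by nlinarith [dist_nonneg (x := x) (y := p)]) dist_nonneg
      exact dist_eq_zero.mp this
    · rintro rfl
      intro i
      exact le_of_eq (hdist1 i)
  · exact hdist1
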